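/- Let v ≥ 1 and k ≥ 0 be integers and let Λ be a finite subgroup of (ℝ/ℤ)^{d+1} having δ-polynomial 1 + t^{k+1} + t^{2(k+1)} + ⋯ + t^{(v−1)(k+1)}. Let x = (x_0,…,x_d) ∈ Λ be an element with ht(x) = k+1, and let m denote the additive order of x. Then every coordinate x_i equals either 0 or the class of 1/m in ℝ/ℤ; consequently exactly m(k+1) coordinates of x are nonzero, i.e., up to reordering the coordinates, x = (1/m, …, 1/m, 0, …, 0) with m(k+1) entries equal to 1/m. -/

import Mathlib

open scoped BigOperators

local instance : Fact ((0:ℝ) < 1) := ⟨one_pos⟩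

noncomputable def fracR (x : AddCircle (1:ℝ)) : ℝ :=
  ((AddCircle.equivIco 1 0) x : ℝ)

noncomputable def ht {ι : Type*} [Fintype ι] (x : ι → AddCircle (1:ℝ)) : ℝ :=
  ∑ i, fracR (x i)

/-- `Λ` has δ-polynomial `1 + t^step + t^(2*step) + ⋯ + t^((v-1)*step)` :
the height map is a bijection from `Λ` onto `{j*step : 0 ≤ j ≤ v-1}`. -/
def HasDeltaPoly {ι : Type*} [Fintype ι] (v step : ℕ)
    (Λ : Set (ι → AddCircle (1:ℝ))) : Prop :=
  Set.BijOn ht Λ {y : ℝ | ∃ j : ℕ, j < v ∧ y = (j : ℝ) * (step : ℝ)}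

def NonPyramidal {ι : Type*} [Fintype ι] (Λ : Set (ι → AddCircle (1:ℝ))) : Prop :=
  ∀ i : ι, ∃ x ∈ Λ, x i ≠ 0

/-!
Heights are subadditive, so `ht (j • x) ≤ j * (k + 1)`. The multiples `0, x, …, (m - 1) • x`
are distinct elements of `Λ`, and the heights of elements of `Λ` are distinct multiples of
`k + 1`; an induction on `j` then forces `ht (j • x) = j * (k + 1)` for all `j < m`.
At `j = m - 1` the subadditivity `frac ((m - 1) • a) ≤ (m - 1) * frac a` must be an equality in
every coordinate, so `(m - 1) * frac (x i) < 1`, while `m * frac (x i)` is an integer since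
`m • x = 0`. Hence `m * frac (x i) ∈ {0, 1}`, and counting the coordinates equal to `1/m` in
`ht x = k + 1` gives `m * (k + 1)` of them.
-/

lemma fracR_coe (r : ℝ) : fracR (r : AddCircle (1:ℝ)) = Int.fract r := by
  simp [fracR, AddCircle.coe_equivIco_mk_apply (p := (1:ℝ)) r]

lemma coe_fracR (y : AddCircle (1:ℝ)) : ((fracR y : ℝ) : AddCircle (1:ℝ)) = y :=
  (AddCircle.equivIco (1:ℝ) 0).symm_apply_apply y

lemma fracR_nonneg (y : AddCircle (1:ℝ)) : 0 ≤ fracR y :=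
  ((AddCircle.equivIco (1:ℝ) 0) y).2.1

lemma fracR_lt_one (y : AddCircle (1:ℝ)) : fracR y < 1 :=
  (((AddCircle.equivIco (1:ℝ) 0) y).2.2).trans_eq (zero_add 1)

@[simp]
lemma fracR_zero : fracR (0 : AddCircle (1:ℝ)) = 0 := by
  simpa using fracR_coe 0

lemma fracR_eq_zero_iff {y : AddCircle (1:ℝ)} : fracR y = 0 ↔ y = 0 :=
  ⟨fun h => by rw [← coe_fracR y, h, QuotientAddGroup.mk_zero], fun h => h ▸ fracR_zero⟩

lemma fracR_add_le (a b : AddCircle (1:ℝ)) : fracR (a + b) ≤ fracR a + fracR b := by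
  rw [← coe_fracR a, ← coe_fracR b, ← AddCircle.coe_add, fracR_coe, fracR_coe, fracR_coe]
  exact Int.fract_add_le _ _

lemma fracR_nsmul_le (y : AddCircle (1:ℝ)) (n : ℕ) : fracR (n • y) ≤ n * fracR y := by
  induction n with
  | zero => simp
  | succ n ih =>
    calc fracR ((n + 1) • y) ≤ fracR (n • y) + fracR y := by
          rw [succ_nsmul]; exact fracR_add_le _ _
      _ ≤ (n + 1 : ℕ) * fracR y := by push_cast; linarith

lemma fracR_eq_zero_or_eq_one_div {y : AddCircle (1:ℝ)} {m : ℕ} (hm : 0 < m)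
    (hmy : m • y = 0) (hsmall : ((m - 1 : ℕ) : ℝ) * fracR y < 1) :
    fracR y = 0 ∨ fracR y = 1 / m := by
  obtain ⟨z, hz⟩ : ∃ z : ℤ, (z : ℝ) = m * fracR y := by
    rw [← coe_fracR y, ← AddCircle.coe_nsmul, nsmul_eq_mul] at hmy
    simpa using (AddCircle.coe_eq_zero_iff (1:ℝ)).mp hmy
  have hm' : ((m - 1 : ℕ) : ℝ) = m - 1 := by push_cast [Nat.cast_sub hm]; ring
  rw [hm'] at hsmall
  have hz0 : (0 : ℝ) ≤ z := hz ▸ mul_nonneg m.cast_nonneg (fracR_nonneg y)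
  have hz2 : (z : ℝ) < 2 := by linarith [fracR_lt_one y]
  have hmR : (m : ℝ) ≠ 0 := by positivity
  obtain rfl | rfl : z = 0 ∨ z = 1 := by
    have : 0 ≤ z := by exact_mod_cast hz0
    have : z < 2 := by exact_mod_cast hz2
    omega
  · left; simpa [hmR] using hz.symm
  · right; field_simp; simpa [mul_comm] using hz.symm

section Height

variable {ι : Type*} [Fintype ι]

lemma ht_add_le (a b : ι → AddCircle (1:ℝ)) : ht (a + b) ≤ ht a + ht b := by
  rw [ht, ht, ht, ← Finset.sum_add_distrib]
  exact Finset.sum_le_sum fun i _ => fracR_add_le (a i) (b i)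

lemma ht_nsmul_le (x : ι → AddCircle (1:ℝ)) (n : ℕ) : ht (n • x) ≤ n * ht x := by
  rw [ht, ht, Finset.mul_sum]
  exact Finset.sum_le_sum fun i _ => fracR_nsmul_le (x i) n

lemma fracR_nsmul_eq_of_ht_nsmul_eq {x : ι → AddCircle (1:ℝ)} {n : ℕ}
    (h : ht (n • x) = n * ht x) (i : ι) : fracR (n • x i) = n * fracR (x i) := by
  rw [ht, ht, Finset.mul_sum] at h
  exact (Finset.sum_eq_sum_iff_of_le fun i _ => fracR_nsmul_le (x i) n).mp h i
    (Finset.mem_univ i)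

lemma ht_eq_card_ne_zero_div {x : ι → AddCircle (1:ℝ)} {m : ℕ}
    (hx : ∀ i, fracR (x i) = 0 ∨ fracR (x i) = 1 / m) :
    ht x = (Finset.univ.filter (fun i => x i ≠ 0)).card / m := by
  have hval : ∀ i, fracR (x i) = if x i ≠ 0 then 1 / (m : ℝ) else 0 := fun i => by
    split_ifs with hxi
    · exact (hx i).resolve_left (mt fracR_eq_zero_iff.mp hxi)
    · rw [not_not.mp hxi, fracR_zero]
  rw [ht, Finset.sum_congr rfl fun i _ => hval i, Finset.sum_ite, Finset.sum_const_zero,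
    Finset.sum_const, nsmul_eq_mul]
  ring

lemma ht_nsmul_of_lt_addOrderOf {v step : ℕ} {Λ : AddSubgroup (ι → AddCircle (1:ℝ))}
    (hΛ : HasDeltaPoly v step (Λ : Set (ι → AddCircle (1:ℝ)))) (hstep : 0 < step)
    {x : ι → AddCircle (1:ℝ)} (hx : x ∈ Λ) (hht : ht x = step) :
    ∀ j < addOrderOf x, ht (j • x) = j * step := by
  intro j
  induction j using Nat.strong_induction_on with
  | _ j ih =>
    intro hj
    obtain ⟨c, -, hc⟩ := hΛ.mapsTo (Λ.nsmul_mem hx j)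
    have hcj : c ≤ j := by
      have := ht_nsmul_le x j
      rw [hc, hht] at this
      exact_mod_cast le_of_mul_le_mul_right this (by exact_mod_cast hstep)
    obtain rfl | hlt := hcj.eq_or_lt
    · exact hc
    · have hsame : c • x = j • x :=
        hΛ.injOn (Λ.nsmul_mem hx c) (Λ.nsmul_mem hx j) (by rw [ih c hlt (hlt.trans hj), hc])
      exact absurd (nsmul_injOn_Iio_addOrderOf (hlt.trans hj) hj hsame) hlt.ne

end Height

theorem stmt_9_general (v k d : ℕ)
    (Λ : AddSubgroup (Fin (d+1) → AddCircle (1:ℝ)))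
    (hfin : (Λ : Set (Fin (d+1) → AddCircle (1:ℝ))).Finite)
    (hΛ : HasDeltaPoly v (k+1) (Λ : Set (Fin (d+1) → AddCircle (1:ℝ))))
    (x : Fin (d+1) → AddCircle (1:ℝ)) (hx : x ∈ Λ)
    (hht : ht x = ((k : ℝ) + 1)) :
    (∀ i : Fin (d+1), x i = 0 ∨
      x i = ((1 / (addOrderOf x : ℝ) : ℝ) : AddCircle (1:ℝ))) ∧
    (Finset.univ.filter (fun i : Fin (d+1) => x i ≠ 0)).card
      = addOrderOf x * (k+1) := by
  have : Finite Λ := hfin.to_subtype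
  have hm : 0 < addOrderOf x := by
    rw [← AddSubgroup.addOrderOf_mk x hx]
    exact (isOfFinAddOrder_of_finite _).addOrderOf_pos
  set m := addOrderOf x
  have hht' : ht x = (k + 1 : ℕ) := by push_cast; exact hht
  have hlast : ht ((m - 1) • x) = (m - 1 : ℕ) * ht x := by
    rw [ht_nsmul_of_lt_addOrderOf hΛ k.succ_pos hx hht' (m - 1) (by omega), hht']
  have hfrac : ∀ i, fracR (x i) = 0 ∨ fracR (x i) = 1 / m := fun i =>
    fracR_eq_zero_or_eq_one_div hm (congrFun (addOrderOf_nsmul_eq_zero x) i)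
      (fracR_nsmul_eq_of_ht_nsmul_eq hlast i ▸ fracR_lt_one _)
  refine ⟨fun i => (hfrac i).imp fracR_eq_zero_iff.mp
    fun h => by rw [← coe_fracR (x i), h], ?_⟩
  have hcard := ht_eq_card_ne_zero_div hfrac
  rw [hht', eq_div_iff (by positivity)] at hcard
  rw [mul_comm]
  exact_mod_cast hcard.symm

theorem stmt_9 (v k d : ℕ) (hv : 1 ≤ v)
    (Λ : AddSubgroup (Fin (d+1) → AddCircle (1:ℝ)))
    (hfin : (Λ : Set (Fin (d+1) → AddCircle (1:ℝ))).Finite)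
    (hΛ : HasDeltaPoly v (k+1) (Λ : Set (Fin (d+1) → AddCircle (1:ℝ))))
    (x : Fin (d+1) → AddCircle (1:ℝ)) (hx : x ∈ Λ)
    (hht : ht x = ((k : ℝ) + 1)) :
    (∀ i : Fin (d+1), x i = 0 ∨
      x i = ((1 / (addOrderOf x : ℝ) : ℝ) : AddCircle (1:ℝ))) ∧
    (Finset.univ.filter (fun i : Fin (d+1) => x i ≠ 0)).card
      = addOrderOf x * (k+1) :=
  stmt_9_general v k d Λ hfin hΛ x hx hht
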